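/- arXiv:2203.04297 — 2 statements merged into one kernel-verified Lean document; each statement's English description precedes it below -/
import Mathlib

section
/- Let S be a nonempty finite set and Δ(S) = {d : S → ℝ | d(s) ≥ 0 for all s, Σ_{s∈S} d(s) = 1}. Let H : (S → ℝ) → ℝ and g : (S → ℝ) → (S → ℝ) be such that for every d in the nonnegative orthant, H is Fréchet-differentiable at d with derivative v ↦ Σ_{s∈S} g(d)(s)·v(s). Assume: (i) H is concave on Δ(S); (ii) ‖g(d) − g(d')‖_∞ ≤ β·‖d − d'‖_∞ for all nonnegative d, d'; (iii) ‖g(d)‖_∞ ≤ B for all nonnegative d; (iv) H(d*) − H(d_0) ≤ B for all d* ∈ Δ(S). Let η ∈ (0,1], ε₁ ≥ 0, ε₂ ≥ 0, and let sequences (d_t), (q_t) in Δ(S) and nonnegative functions (d̂_t) satisfy: d_{t+1} = (1−η)·d_t + η·q_t, ‖d̂_t − d_t‖_∞ ≤ ε₂, and Σ_{s} g(d̂_t)(s)·q_t(s) ≥ max_{q∈Δ(S)} Σ_{s} g(d̂_t)(s)·q(s) − ε₁ for every t. Then for every T ∈ ℕ and every d* ∈ Δ(S), H(d*) − H(d_T)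 ≤ B·exp(−T·η) + 2β·ε₂ + ε₁ + η·β. -/
/-!
Write `gap t = H d* - H (d t)`. Concavity bounds `gap t` by the pairing `⟨g (d t), d* - d t⟩`.
The oracle is only queried at the estimate `d̂ t`, which costs `2βε₂` on top of `ε₁`, because `g`
is `β`-Lipschitz for the sup norm and differences of points of the simplex have `ℓ¹`-norm at
most `2`. Along the segment from `d t` to `q t` the same Lipschitz bound limits the loss of
the linear approximation to `βη²`. Together, `gap (t+1) ≤ (1 - η) gap t + η (ε₁ + 2βε₂ + ηβ)`,
and unrolling with `(1 - η)^T ≤ exp (-Tη)` gives the bound.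
-/

open Set AffineMap Matrix

theorem ConcaveOn.sub_le_of_hasFDerivAt {E : Type*} [NormedAddCommGroup E] [NormedSpace ℝ E]
    {s : Set E} {f : E → ℝ} {f' : E →L[ℝ] ℝ} {x y : E} (hf : ConcaveOn ℝ s f)
    (hx : x ∈ s) (hy : y ∈ s) (hf' : HasFDerivAt f f' x) : f y - f x ≤ f' (y - x) := by
  have hline : ConcaveOn ℝ (lineMap (k := ℝ) x y ⁻¹' s) (f ∘ lineMap x y) :=
    hf.comp_affineMap _
  have hderiv : HasDerivAt (f ∘ lineMap (k := ℝ) x y) (f' (y - x)) 0 := by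
    rw [← lineMap_apply_zero (k := ℝ) x y] at hf'
    exact hf'.comp_hasDerivAt 0 hasDerivAt_lineMap
  simpa [slope_def_field] using
    hline.slope_le_of_hasDerivAt (by simpa using hx) (by simpa using hy) zero_lt_one hderiv

theorem le_image_of_hasDerivAt_of_sub_mul_le {φ φ' : ℝ → ℝ} {C t : ℝ} (ht : 0 ≤ t)
    (hφ : ∀ u ∈ Icc 0 t, HasDerivAt φ (φ' u) u) (hφ' : ∀ u ∈ Icc 0 t, φ' 0 - C * u ≤ φ' u) :
    φ 0 + t * φ' 0 - C / 2 * t ^ 2 ≤ φ t := by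
  set θ : ℝ → ℝ := fun u => φ u - u * φ' 0 + C / 2 * u ^ 2
  have hθ : ∀ u ∈ Icc 0 t, HasDerivAt θ (φ' u - φ' 0 + C * u) u := fun u hu =>
    (((hφ u hu).sub ((hasDerivAt_id' u).mul_const (φ' 0))).add
      ((hasDerivAt_pow 2 u).const_mul (C / 2))).congr_deriv (by ring)
  have hmono : MonotoneOn θ (Icc 0 t) :=
    monotoneOn_of_hasDerivWithinAt_nonneg (convex_Icc 0 t)
      (fun u hu => (hθ u hu).continuousAt.continuousWithinAt)
      (fun u hu => (hθ u (interior_subset hu)).hasDerivWithinAt)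
      (fun u hu => by linarith [hφ' u (interior_subset hu)])
  have := hmono (left_mem_Icc.mpr ht) (right_mem_Icc.mpr ht) ht
  simp only [θ] at this
  linarith

theorem sub_le_one_sub_pow_mul_of_le {a : ℕ → ℝ} {η c : ℝ} (hη : η ≤ 1)
    (h : ∀ t, a (t + 1) ≤ (1 - η) * a t + η * c) (T : ℕ) :
    a T - c ≤ (1 - η) ^ T * (a 0 - c) := by
  induction T with
  | zero => simp
  | succ T ih =>
    calc a (T + 1) - c ≤ (1 - η) * (a T - c) := by linarith [h T]
      _ ≤ (1 - η) * ((1 - η) ^ T * (a 0 - c)) := by gcongr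
      _ = (1 - η) ^ (T + 1) * (a 0 - c) := by ring

theorem one_sub_pow_le_exp_neg_mul {η : ℝ} (hη : η ≤ 1) (T : ℕ) :
    (1 - η) ^ T ≤ Real.exp (-T * η) := by
  calc (1 - η) ^ T ≤ Real.exp (-η) ^ T :=
        pow_le_pow_left₀ (by linarith) (Real.one_sub_le_exp_neg η) T
    _ = Real.exp (-T * η) := by rw [← Real.exp_nat_mul]; ring_nf

theorem le_mul_exp_add_of_le_one_sub_mul_add {a : ℕ → ℝ} {η c B : ℝ} (hη : η ≤ 1) (hc : 0 ≤ c)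
    (hB : 0 ≤ B) (ha : a 0 ≤ B) (h : ∀ t, a (t + 1) ≤ (1 - η) * a t + η * c) (T : ℕ) :
    a T ≤ B * Real.exp (-T * η) + c := by
  calc a T ≤ (1 - η) ^ T * (a 0 - c) + c := by linarith [sub_le_one_sub_pow_mul_of_le hη h T]
    _ ≤ (1 - η) ^ T * B + c := by gcongr; linarith
    _ ≤ B * Real.exp (-T * η) + c := by
        rw [mul_comm]
        gcongr
        exact one_sub_pow_le_exp_neg_mul hη T

section Simplex

variable {S : Type*} [Fintype S]

theorem abs_dotProduct_sub_le_two_mul_norm {x y : S → ℝ} (hx : x ∈ stdSimplex ℝ S)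
    (hy : y ∈ stdSimplex ℝ S) (f : S → ℝ) : |f ⬝ᵥ (x - y)| ≤ 2 * ‖f‖ := by
  calc |f ⬝ᵥ (x - y)| ≤ ∑ s, |f s| * |x s - y s| := by
        simpa only [dotProduct, Pi.sub_apply, abs_mul] using
          Finset.abs_sum_le_sum_abs (fun s => f s * (x - y) s) Finset.univ
    _ ≤ ∑ s, ‖f‖ * (x s + y s) := by
        gcongr with s
        · exact norm_le_pi_norm f s
        · exact abs_le.mpr ⟨by linarith [hx.1 s], by linarith [hy.1 s]⟩
    _ = 2 * ‖f‖ := by rw [← Finset.mul_sum, Finset.sum_add_distrib, hx.2, hy.2]; ring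

theorem norm_lineMap_sub_le {x y : S → ℝ} (hx : x ∈ stdSimplex ℝ S) (hy : y ∈ stdSimplex ℝ S)
    {u : ℝ} (hu : 0 ≤ u) : ‖lineMap x y u - x‖ ≤ u := by
  rw [← dist_eq_norm, dist_lineMap_left, Real.norm_of_nonneg hu]
  exact mul_le_of_le_one_right hu <|
    (Metric.dist_le_diam_of_mem (bounded_stdSimplex S) hx hy).trans diam_stdSimplex_le

end Simplex

section FrankWolfe

variable {S : Type*} [Fintype S] {H : (S → ℝ) → ℝ} {g : (S → ℝ) → (S → ℝ)} {β : ℝ}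

theorem hasDerivAt_comp_lineMap
    (hdiff : ∀ d ∈ stdSimplex ℝ S,
      ∃ L : (S → ℝ) →L[ℝ] ℝ, (∀ v, L v = g d ⬝ᵥ v) ∧ HasFDerivAt H L d)
    {x y : S → ℝ} (hx : x ∈ stdSimplex ℝ S) (hy : y ∈ stdSimplex ℝ S) {u : ℝ}
    (hu : u ∈ Icc 0 1) :
    HasDerivAt (H ∘ lineMap x y) (g (lineMap x y u) ⬝ᵥ (y - x)) u := by
  obtain ⟨L, hL, hHL⟩ := hdiff _ (convex_stdSimplex ℝ S |>.lineMap_mem hx hy hu)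
  rw [← hL]
  exact hHL.comp_hasDerivAt u hasDerivAt_lineMap

theorem le_apply_lineMap_of_lipschitz_grad
    (hdiff : ∀ d ∈ stdSimplex ℝ S,
      ∃ L : (S → ℝ) →L[ℝ] ℝ, (∀ v, L v = g d ⬝ᵥ v) ∧ HasFDerivAt H L d)
    (hlip : ∀ d ∈ stdSimplex ℝ S, ∀ d' ∈ stdSimplex ℝ S, ‖g d - g d'‖ ≤ β * ‖d - d'‖)
    (hβ : 0 ≤ β) {x q : S → ℝ} (hx : x ∈ stdSimplex ℝ S) (hq : q ∈ stdSimplex ℝ S) {η : ℝ}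
    (hη : η ∈ Icc 0 1) :
    H x + η * g x ⬝ᵥ (q - x) - β * η ^ 2 ≤ H (lineMap x q η) := by
  have hsub : ∀ u ∈ Icc 0 η, u ∈ Icc (0 : ℝ) 1 := fun u hu => ⟨hu.1, hu.2.trans hη.2⟩
  have hgrad_sub : ∀ u ∈ Icc 0 η,
      g x ⬝ᵥ (q - x) - 2 * β * u ≤ g (lineMap x q u) ⬝ᵥ (q - x) := fun u hu => by
    have hpair := abs_le.mp <| abs_dotProduct_sub_le_two_mul_norm hq hx (g (lineMap x q u) - g x)
    have hclose : ‖g (lineMap x q u) - g x‖ ≤ β * u :=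
      (hlip _ (convex_stdSimplex ℝ S |>.lineMap_mem hx hq (hsub u hu)) x hx).trans <|
        mul_le_mul_of_nonneg_left (norm_lineMap_sub_le hx hq hu.1) hβ
    rw [sub_dotProduct] at hpair
    linarith [hpair.1]
  have := le_image_of_hasDerivAt_of_sub_mul_le hη.1
    (fun u hu => hasDerivAt_comp_lineMap hdiff hx hq (hsub u hu))
    (by simpa only [lineMap_apply_zero] using hgrad_sub)
  simp only [Function.comp_apply, lineMap_apply_zero] at this
  linarith

theorem frankWolfe_step_gap_le
    (hdiff : ∀ d ∈ stdSimplex ℝ S,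
      ∃ L : (S → ℝ) →L[ℝ] ℝ, (∀ v, L v = g d ⬝ᵥ v) ∧ HasFDerivAt H L d)
    (hconc : ConcaveOn ℝ (stdSimplex ℝ S) H)
    (hlip : ∀ d d' : S → ℝ, (∀ s, 0 ≤ d s) → (∀ s, 0 ≤ d' s) →
      ‖g d - g d'‖ ≤ β * ‖d - d'‖)
    (hβ : 0 ≤ β) {η ε₁ ε₂ : ℝ} (hη : η ∈ Icc 0 1) {x q xhat dstar : S → ℝ}
    (hx : x ∈ stdSimplex ℝ S) (hq : q ∈ stdSimplex ℝ S) (hxhat : ∀ s, 0 ≤ xhat s)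
    (hdstar : dstar ∈ stdSimplex ℝ S) (hest : ‖xhat - x‖ ≤ ε₂)
    (horacle : g xhat ⬝ᵥ dstar - ε₁ ≤ g xhat ⬝ᵥ q) :
    H dstar - H (lineMap x q η) ≤ (1 - η) * (H dstar - H x) + η * (ε₁ + 2 * β * ε₂ + η * β) := by
  have hconcave : H dstar - H x ≤ g x ⬝ᵥ (dstar - x) := by
    obtain ⟨L, hL, hHL⟩ := hdiff x hx
    simpa only [hL] using hconc.sub_le_of_hasFDerivAt hx hdstar hHL
  have horacle_exact : g x ⬝ᵥ (dstar - q) ≤ ε₁ + 2 * β * ε₂ := by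
    have hpair := abs_le.mp <| abs_dotProduct_sub_le_two_mul_norm hdstar hq (g x - g xhat)
    have hclose : ‖g x - g xhat‖ ≤ β * ε₂ :=
      (hlip x xhat hx.1 hxhat).trans <| by rw [norm_sub_rev]; gcongr
    rw [sub_dotProduct, dotProduct_sub, dotProduct_sub] at hpair
    rw [dotProduct_sub]
    linarith [hpair.2]
  have hascent := le_apply_lineMap_of_lipschitz_grad hdiff
    (fun d hd d' hd' => hlip d d' hd.1 hd'.1) hβ hx hq hη
  have hdir : H dstar - H x - (ε₁ + 2 * β * ε₂) ≤ g x ⬝ᵥ (q - x) := by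
    have hsplit : g x ⬝ᵥ (q - x) = g x ⬝ᵥ (dstar - x) - g x ⬝ᵥ (dstar - q) := by
      simp only [dotProduct_sub]; ring
    linarith
  linarith [mul_le_mul_of_nonneg_left hdir hη.1]

end FrankWolfe

theorem mepc_convergence_bound_general
    {S : Type*} [Fintype S]
    (H : (S → ℝ) → ℝ) (g : (S → ℝ) → (S → ℝ)) (β B η ε₁ ε₂ : ℝ)
    (hdiff : ∀ d : S → ℝ, (∀ s, 0 ≤ d s) →
      ∃ L : (S → ℝ) →L[ℝ] ℝ, (∀ v, L v = ∑ s, g d s * v s) ∧ HasFDerivAt H L d)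
    (hconc : ConcaveOn ℝ {d : S → ℝ | (∀ s, 0 ≤ d s) ∧ ∑ s, d s = 1} H)
    (hlip : ∀ d d' : S → ℝ, (∀ s, 0 ≤ d s) → (∀ s, 0 ≤ d' s) →
      ‖g d - g d'‖ ≤ β * ‖d - d'‖)
    (hη : η ∈ Set.Ioc (0 : ℝ) 1) (hε₁ : 0 ≤ ε₁) (hε₂ : 0 ≤ ε₂)
    (d q : ℕ → S → ℝ) (dhat : ℕ → S → ℝ)
    (hd : ∀ t, (∀ s, 0 ≤ d t s) ∧ ∑ s, d t s = 1)
    (hq : ∀ t, (∀ s, 0 ≤ q t s) ∧ ∑ s, q t s = 1)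
    (hdhat : ∀ t, ∀ s, 0 ≤ dhat t s)
    (hgap : ∀ dstar : S → ℝ, ((∀ s, 0 ≤ dstar s) ∧ ∑ s, dstar s = 1) →
      H dstar - H (d 0) ≤ B)
    (hstep : ∀ t, d (t + 1) = fun s => (1 - η) * d t s + η * q t s)
    (hest : ∀ t, ‖dhat t - d t‖ ≤ ε₂)
    (horacle : ∀ t, ∀ q' : S → ℝ, ((∀ s, 0 ≤ q' s) ∧ ∑ s, q' s = 1) →
      ∑ s, g (dhat t) s * q t s ≥ ∑ s, g (dhat t) s * q' s - ε₁) :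
    ∀ (T : ℕ) (dstar : S → ℝ), ((∀ s, 0 ≤ dstar s) ∧ ∑ s, dstar s = 1) →
      H dstar - H (d T) ≤ B * Real.exp (-(T : ℝ) * η) + 2 * β * ε₂ + ε₁ + η * β := by
  intro T dstar hdstar
  have hB : 0 ≤ B := by simpa using hgap (d 0) (hd 0)
  have hβ : 0 ≤ β := by
    have hpos : 0 < ‖d 0‖ := norm_pos_iff.mpr fun h => by simpa [h] using (hd 0).2
    have := (norm_nonneg _).trans (hlip (d 0) 0 (hd 0).1 fun _ => le_rfl)
    rw [sub_zero] at this
    exact nonneg_of_mul_nonneg_left this hpos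
  have hrec : ∀ t, H dstar - H (d (t + 1)) ≤
      (1 - η) * (H dstar - H (d t)) + η * (ε₁ + 2 * β * ε₂ + η * β) := fun t => by
    have hline : d (t + 1) = lineMap (d t) (q t) η := by
      ext s; simp [hstep t, lineMap_apply_module]
    rw [hline]
    exact frankWolfe_step_gap_le (fun x hx => hdiff x hx.1) hconc hlip hβ (Ioc_subset_Icc_self hη)
      (hd t) (hq t) (hdhat t) hdstar (hest t) (horacle t dstar hdstar)
  have hc : 0 ≤ ε₁ + 2 * β * ε₂ + η * β := by have := hη.1; positivity
  have := le_mul_exp_add_of_le_one_sub_mul_add (a := fun t => H dstar - H (d t)) hη.2 hc hB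
    (hgap dstar hdstar) hrec T
  linarith

/-- convergence bound for maximum-entropy policy computation /
Frank–Wolfe over the simplex. `Δ(S)` is represented by the predicate
`(∀ s, 0 ≤ d s) ∧ ∑ s, d s = 1`; all norms are sup norms on `S → ℝ`. -/
theorem mepc_convergence_bound
    {S : Type*} [Fintype S] [Nonempty S]
    (H : (S → ℝ) → ℝ) (g : (S → ℝ) → (S → ℝ)) (β B η ε₁ ε₂ : ℝ)
    (hdiff : ∀ d : S → ℝ, (∀ s, 0 ≤ d s) →
      ∃ L : (S → ℝ) →L[ℝ] ℝ, (∀ v, L v = ∑ s, g d s * v s) ∧ HasFDerivAt H L d)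
    (hconc : ConcaveOn ℝ {d : S → ℝ | (∀ s, 0 ≤ d s) ∧ ∑ s, d s = 1} H)
    (hlip : ∀ d d' : S → ℝ, (∀ s, 0 ≤ d s) → (∀ s, 0 ≤ d' s) →
      ‖g d - g d'‖ ≤ β * ‖d - d'‖)
    (hgbound : ∀ d : S → ℝ, (∀ s, 0 ≤ d s) → ‖g d‖ ≤ B)
    (hη : η ∈ Set.Ioc (0 : ℝ) 1) (hε₁ : 0 ≤ ε₁) (hε₂ : 0 ≤ ε₂)
    (d q : ℕ → S → ℝ) (dhat : ℕ → S → ℝ)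
    (hd : ∀ t, (∀ s, 0 ≤ d t s) ∧ ∑ s, d t s = 1)
    (hq : ∀ t, (∀ s, 0 ≤ q t s) ∧ ∑ s, q t s = 1)
    (hdhat : ∀ t, ∀ s, 0 ≤ dhat t s)
    (hgap : ∀ dstar : S → ℝ, ((∀ s, 0 ≤ dstar s) ∧ ∑ s, dstar s = 1) →
      H dstar - H (d 0) ≤ B)
    (hstep : ∀ t, d (t + 1) = fun s => (1 - η) * d t s + η * q t s)
    (hest : ∀ t, ‖dhat t - d t‖ ≤ ε₂)
    (horacle : ∀ t, ∀ q' : S → ℝ, ((∀ s, 0 ≤ q' s) ∧ ∑ s, q' s = 1) →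
      ∑ s, g (dhat t) s * q t s ≥ ∑ s, g (dhat t) s * q' s - ε₁) :
    ∀ (T : ℕ) (dstar : S → ℝ), ((∀ s, 0 ≤ dstar s) ∧ ∑ s, dstar s = 1) →
      H dstar - H (d T) ≤ B * Real.exp (-(T : ℝ) * η) + 2 * β * ε₂ + ε₁ + η * β :=
  mepc_convergence_bound_general H g β B η ε₁ ε₂ hdiff hconc hlip hη hε₁ hε₂ d q dhat hd hq hdhat
    hgap hstep hest horacle
end

section
/- Let S be a nonempty finite set, α ∈ (0,1), σ > 0, and let H̃_{α,σ}(d) = (1/(1−α)) · Σ_{s∈S} (d(s)+σ)^α with β = α·σ^{α−2} and B = (α/(1−α))·σ^{α−1}. Let ε > 0 with 0.1ε ≤ β, set ε₁ = 0.1ε, ε₂ = 0.1·β^{−1}·ε, η = 0.1·β^{−1}·ε. Let g(d)(s) = (α/(1−α))·(d(s)+σ)^{α−1}, and let sequences (d_t), (q_t) in the simplex Δ(S) and nonnegative functions (d̂_t) satisfy: d_{t+1} = (1−η)·d_t + η·q_t, ‖d̂_t − d_t‖_∞ ≤ ε₂, Σ_s g(d̂_t)(s)·q_t(s) ≥ max_{q∈Δ(S)}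 Σ_s g(d̂_t)(s)·q(s) − ε₁ for every t, and H̃_{α,σ}(d*) − H̃_{α,σ}(d_0) ≤ B for all d* ∈ Δ(S). Then for every natural number T ≥ (10·α·σ^{α−2}/ε)·log(10·α·σ^{α−1}/((1−α)·ε)), it holds that H̃_{α,σ}(d_T) ≥ max_{d∈Δ(S)} H̃_{α,σ}(d) − ε. -/
set_option maxHeartbeats 1000000


lemma renyi_bern {p x : ℝ} (hp0 : 0 < p) (hp1 : p < 1) (hx : 0 ≤ x) :
    x ^ p ≤ 1 + p * (x - 1) := by
  have h := rpow_one_add_le_one_add_mul_self (s := x - 1) (by linarith) hp0.le hp1.le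
  have hxe : 1 + (x - 1) = x := by ring
  rwa [hxe] at h

lemma renyi_bern_neg {p x : ℝ} (hp0 : 0 < p) (hp1 : p < 1) (hx : 0 < x) :
    1 - p * (x - 1) ≤ x ^ (-p) := by
  have h1 : x ^ p ≤ 1 + p * (x - 1) := renyi_bern hp0 hp1 hx.le
  have hpos : 0 < 1 + p * (x - 1) := by nlinarith
  have hxp : 0 < x ^ p := Real.rpow_pos_of_pos hx p
  rw [Real.rpow_neg hx.le]
  have h3 : (1 + p * (x - 1))⁻¹ ≤ (x ^ p)⁻¹ := by
    apply inv_anti₀ hxp h1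
  have h4 : 1 - p * (x - 1) ≤ (1 + p * (x - 1))⁻¹ := by
    rw [← one_div, le_div_iff₀ hpos]
    nlinarith [sq_nonneg (p * (x - 1))]
  linarith

lemma renyi_concave_tangent {α : ℝ} (hα0 : 0 < α) (hα1 : α < 1) {a b : ℝ}
    (ha : 0 < a) (hb : 0 ≤ b) :
    b ^ α ≤ a ^ α + α * a ^ (α - 1) * (b - a) := by
  have h := renyi_bern (x := b / a) hα0 hα1 (div_nonneg hb ha.le)
  have hapos : 0 < a ^ α := Real.rpow_pos_of_pos ha α
  have hbdiv : (b / a) ^ α = b ^ α / a ^ α := Real.div_rpow hb ha.le α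
  rw [hbdiv] at h
  have h2 : b ^ α ≤ a ^ α * (1 + α * (b / a - 1)) := by
    rw [div_le_iff₀ hapos] at h
    linarith [h]
  have h3 : a ^ (α - 1) = a ^ α / a := by
    rw [Real.rpow_sub ha, Real.rpow_one]
  rw [h3]
  have h4 : a ^ α * (1 + α * (b / a - 1)) = a ^ α + α * (a ^ α / a) * (b - a) := by
    field_simp
  linarith [h2, h4.symm.le]

lemma renyi_convex_tangent {α : ℝ} (hα0 : 0 < α) (hα1 : α < 1) {a b : ℝ}
    (ha : 0 < a) (hb : 0 < b) :
    a ^ (α - 1) + (α - 1) * a ^ (α - 2) * (b - a) ≤ b ^ (α - 1) := by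
  have h := renyi_bern_neg (p := 1 - α) (by linarith) (by linarith) (div_pos hb ha)
  have hneg : -(1 - α) = α - 1 := by ring
  rw [hneg] at h
  have hdiv : (b / a) ^ (α - 1) = b ^ (α - 1) / a ^ (α - 1) := Real.div_rpow hb.le ha.le _
  rw [hdiv] at h
  have hapos : 0 < a ^ (α - 1) := Real.rpow_pos_of_pos ha _
  have h2 : a ^ (α - 1) * (1 - (1 - α) * (b / a - 1)) ≤ b ^ (α - 1) := by
    rw [le_div_iff₀ hapos] at h
    nlinarith [h]
  have h3 : a ^ (α - 2) = a ^ (α - 1) / a := by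
    rw [show α - 2 = α - 1 - 1 by ring, Real.rpow_sub ha, Real.rpow_one]
  rw [h3]
  have h4 : a ^ (α - 1) * (1 - (1 - α) * (b / a - 1))
      = a ^ (α - 1) + (α - 1) * (a ^ (α - 1) / a) * (b - a) := by
    field_simp
    ring
  linarith [h2, h4.symm.le]

lemma renyi_grad_lip_one {α σ : ℝ} (hα0 : 0 < α) (hα1 : α < 1) (hσ : 0 < σ) {a b : ℝ}
    (ha : σ ≤ a) (hb : σ ≤ b) :
    a ^ (α - 1) - b ^ (α - 1) ≤ (1 - α) * σ ^ (α - 2) * |a - b| := by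
  have hap : 0 < a := lt_of_lt_of_le hσ ha
  have hbp : 0 < b := lt_of_lt_of_le hσ hb
  have hσp : 0 < σ ^ (α - 2) := Real.rpow_pos_of_pos hσ _
  rcases le_total a b with hab | hab
  · have h := renyi_convex_tangent hα0 hα1 hap hbp
    have hmono : a ^ (α - 2) ≤ σ ^ (α - 2) :=
      Real.rpow_le_rpow_of_nonpos hσ ha (by linarith)
    have habs : |a - b| = b - a := by
      rw [abs_sub_comm, abs_of_nonneg (by linarith)]
    rw [habs]
    nlinarith [h, mul_le_mul_of_nonneg_left hmono
      (mul_nonneg (by linarith : (0:ℝ) ≤ 1 - α) (by linarith : (0:ℝ) ≤ b - a))]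
  · have h : a ^ (α - 1) ≤ b ^ (α - 1) :=
      Real.rpow_le_rpow_of_nonpos hbp hab (by linarith)
    have : 0 ≤ (1 - α) * σ ^ (α - 2) * |a - b| := by
      apply mul_nonneg (mul_nonneg (by linarith) hσp.le) (abs_nonneg _)
    linarith

lemma renyi_grad_lip {α σ : ℝ} (hα0 : 0 < α) (hα1 : α < 1) (hσ : 0 < σ) {a b : ℝ}
    (ha : σ ≤ a) (hb : σ ≤ b) :
    |a ^ (α - 1) - b ^ (α - 1)| ≤ (1 - α) * σ ^ (α - 2) * |a - b| := by
  rw [abs_sub_le_iff]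
  constructor
  · exact renyi_grad_lip_one hα0 hα1 hσ ha hb
  · rw [abs_sub_comm]
    exact renyi_grad_lip_one hα0 hα1 hσ hb ha

lemma renyi_smooth {α σ : ℝ} (hα0 : 0 < α) (hα1 : α < 1) (hσ : 0 < σ) {a b : ℝ}
    (ha : σ ≤ a) (hb : σ ≤ b) :
    a ^ α + α * a ^ (α - 1) * (b - a) - α * ((1 - α) * σ ^ (α - 2)) * (b - a) ^ 2
      ≤ b ^ α := by
  have hap : 0 < a := lt_of_lt_of_le hσ ha
  have hbp : 0 < b := lt_of_lt_of_le hσ hb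
  have h1 := renyi_concave_tangent hα0 hα1 hbp hap.le
  -- a^α ≤ b^α + α b^{α-1} (a - b)
  have h2 := renyi_grad_lip hα0 hα1 hσ hb ha
  -- |b^{α-1} - a^{α-1}| ≤ K |b - a|
  have h5 : -(|b ^ (α - 1) - a ^ (α - 1)| * |b - a|) ≤ (b ^ (α - 1) - a ^ (α - 1)) * (b - a) := by
    rw [← abs_mul]
    exact neg_abs_le _
  have h6 : |b ^ (α - 1) - a ^ (α - 1)| * |b - a|
      ≤ (1 - α) * σ ^ (α - 2) * |b - a| * |b - a| :=
    mul_le_mul_of_nonneg_right h2 (abs_nonneg _)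
  have h7 : |b - a| * |b - a| = (b - a) ^ 2 := by
    rw [← abs_mul, abs_mul_self, sq]
  rw [mul_assoc ((1 - α) * σ ^ (α - 2)) _ _, h7] at h6
  have hX : -((1 - α) * σ ^ (α - 2) * (b - a) ^ 2)
      ≤ (b ^ (α - 1) - a ^ (α - 1)) * (b - a) := le_trans (neg_le_neg h6) h5
  nlinarith [h1, mul_le_mul_of_nonneg_left hX hα0.le]



/-- (Theorem 1 of the paper: sample complexity of maximizing the
smoothed Rényi state-entropy surrogate `H̃_{α,σ}(d) = (1/(1-α)) ∑ s, (d s + σ)^α`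
by maximum-entropy policy computation, with `β = α·σ^(α−2)`,
`B = (α/(1−α))·σ^(α−1)`, `ε₁ = 0.1ε`, `ε₂ = η = 0.1β⁻¹ε`, gradient
`g(d)(s) = (α/(1−α))·(d s+σ)^(α−1)`). If the algorithm is run for
`T ≥ (10ασ^(α−2)/ε)·log(10ασ^(α−1)/((1−α)ε))` iterations, then
`H̃_{α,σ}(d_T) ≥ max_{d ∈ Δ(S)} H̃_{α,σ}(d) − ε`. -/
theorem renyi_mepc_sample_complexity
    {S : Type*} [Fintype S] [Nonempty S]
    (α σ ε : ℝ) (hα : α ∈ Set.Ioo (0 : ℝ) 1) (hσ : 0 < σ) (hε : 0 < ε)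
    (β B ε₁ ε₂ η : ℝ)
    (hβ : β = α * σ ^ (α - 2)) (hB : B = α / (1 - α) * σ ^ (α - 1))
    (hεβ : 0.1 * ε ≤ β)
    (hε₁ : ε₁ = 0.1 * ε) (hε₂ : ε₂ = 0.1 * β⁻¹ * ε) (hη : η = 0.1 * β⁻¹ * ε)
    (d q : ℕ → S → ℝ) (dhat : ℕ → S → ℝ)
    (hd : ∀ t, (∀ s, 0 ≤ d t s) ∧ ∑ s, d t s = 1)
    (hq : ∀ t, (∀ s, 0 ≤ q t s) ∧ ∑ s, q t s = 1)
    (hdhat : ∀ t, ∀ s, 0 ≤ dhat t s)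
    (hstep : ∀ t, d (t + 1) = fun s => (1 - η) * d t s + η * q t s)
    (hest : ∀ t, ‖dhat t - d t‖ ≤ ε₂)
    (horacle : ∀ t, ∀ q' : S → ℝ, ((∀ s, 0 ≤ q' s) ∧ ∑ s, q' s = 1) →
      ∑ s, (α / (1 - α) * (dhat t s + σ) ^ (α - 1)) * q t s ≥
        ∑ s, (α / (1 - α) * (dhat t s + σ) ^ (α - 1)) * q' s - ε₁)
    (hgap : ∀ dstar : S → ℝ, ((∀ s, 0 ≤ dstar s) ∧ ∑ s, dstar s = 1) →
      (1 / (1 - α)) * ∑ s, (dstar s + σ) ^ α -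
        (1 / (1 - α)) * ∑ s, (d 0 s + σ) ^ α ≤ B) :
    ∀ T : ℕ,
      (T : ℝ) ≥ 10 * α * σ ^ (α - 2) / ε *
          Real.log (10 * α * σ ^ (α - 1) / ((1 - α) * ε)) →
      ∀ dstar : S → ℝ, ((∀ s, 0 ≤ dstar s) ∧ ∑ s, dstar s = 1) →
        (1 / (1 - α)) * ∑ s, (d T s + σ) ^ α ≥
          (1 / (1 - α)) * ∑ s, (dstar s + σ) ^ α - ε := by
  obtain ⟨hα0, hα1⟩ := hα
  have h1α : 0 < 1 - α := by linarith
  have h1αne : (1 : ℝ) - α ≠ 0 := ne_of_gt h1α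
  have hσ2 : 0 < σ ^ (α - 2) := Real.rpow_pos_of_pos hσ _
  have hβpos : 0 < β := by rw [hβ]; exact mul_pos hα0 hσ2
  have hηpos : 0 < η := by
    rw [hη]; exact mul_pos (mul_pos (by norm_num) (inv_pos.mpr hβpos)) hε
  have hε₂pos : 0 < ε₂ := by
    rw [hε₂]; exact mul_pos (mul_pos (by norm_num) (inv_pos.mpr hβpos)) hε
  have hη1 : η ≤ 1 := by
    rw [hη, show (0.1 : ℝ) * β⁻¹ * ε = 0.1 * ε / β by ring, div_le_one hβpos]
    exact hεβ
  have hβε₂ : β * ε₂ = 0.1 * ε := by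
    rw [hε₂]; field_simp
  have hβη : β * η = 0.1 * ε := by
    rw [hη]; field_simp
  intro T hT dstar hdstar
  -- basic simplex facts
  have hds : ∀ t s, σ ≤ d t s + σ := fun t s => le_add_of_nonneg_left ((hd t).1 s)
  have hhs : ∀ t s, σ ≤ dhat t s + σ := fun t s => le_add_of_nonneg_left (hdhat t s)
  have hstars : ∀ s, σ ≤ dstar s + σ := fun s => le_add_of_nonneg_left (hdstar.1 s)
  have hdb : ∀ t s, d t s ≤ 1 := by
    intro t s
    have h := Finset.single_le_sum (f := d t) (fun i _ => (hd t).1 i) (Finset.mem_univ s)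
    rw [(hd t).2] at h; exact h
  have hqb : ∀ t s, q t s ≤ 1 := by
    intro t s
    have h := Finset.single_le_sum (f := q t) (fun i _ => (hq t).1 i) (Finset.mem_univ s)
    rw [(hq t).2] at h; exact h
  have hco : ∀ t s, |d t s - dhat t s| ≤ ε₂ := by
    intro t s
    rw [abs_sub_comm]
    calc |dhat t s - d t s| = ‖(dhat t - d t) s‖ := by simp [Real.norm_eq_abs]
      _ ≤ ‖dhat t - d t‖ := norm_le_pi_norm _ s
      _ ≤ ε₂ := hest t
  obtain ⟨K, hK⟩ : ∃ x : ℝ, x = (1 - α) * σ ^ (α - 2) := ⟨_, rfl⟩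
  have hKnn : 0 ≤ K := by rw [hK]; exact mul_nonneg h1α.le hσ2.le
  set E : ℕ → ℝ :=
    fun n => 1 / (1 - α) * ((∑ s, (dstar s + σ) ^ α) - ∑ s, (d n s + σ) ^ α) with hE
  -- the per-iteration recursion
  have key : ∀ t : ℕ, E (t + 1) ≤ (1 - η) * E t + η * (0.9 * ε) := by
    intro t
    simp only [hE]
    -- gradient estimate per coordinate
    have hlip : ∀ s, |(d t s + σ) ^ (α - 1) - (dhat t s + σ) ^ (α - 1)| ≤ K * ε₂ := by
      intro s
      have h := renyi_grad_lip hα0 hα1 hσ (hds t s) (hhs t s)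
      have heq : d t s + σ - (dhat t s + σ) = d t s - dhat t s := by ring
      rw [heq] at h
      calc |(d t s + σ) ^ (α - 1) - (dhat t s + σ) ^ (α - 1)|
          ≤ (1 - α) * σ ^ (α - 2) * |d t s - dhat t s| := h
        _ ≤ (1 - α) * σ ^ (α - 2) * ε₂ :=
            mul_le_mul_of_nonneg_left (hco t s) (mul_nonneg h1α.le hσ2.le)
        _ = K * ε₂ := by rw [hK]
    -- abbreviations for the sums
    obtain ⟨AS, hAS⟩ : ∃ x : ℝ, x = ∑ s, (d t s + σ) ^ α := ⟨_, rfl⟩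
    obtain ⟨AS', hAS'⟩ : ∃ x : ℝ, x = ∑ s, (d (t + 1) s + σ) ^ α := ⟨_, rfl⟩
    obtain ⟨DS, hDS⟩ : ∃ x : ℝ, x = ∑ s, (dstar s + σ) ^ α := ⟨_, rfl⟩
    obtain ⟨P, hPd⟩ : ∃ x : ℝ, x = ∑ s, (d t s + σ) ^ (α - 1) * (q t s - d t s) := ⟨_, rfl⟩
    obtain ⟨PS, hPSd⟩ : ∃ x : ℝ, x = ∑ s, (d t s + σ) ^ (α - 1) * (dstar s - d t s) := ⟨_, rfl⟩
    obtain ⟨SQh, hSQh⟩ : ∃ x : ℝ, x = ∑ s, (dhat t s + σ) ^ (α - 1) * q t s := ⟨_, rfl⟩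
    obtain ⟨SDh, hSDh⟩ : ∃ x : ℝ, x = ∑ s, (dhat t s + σ) ^ (α - 1) * dstar s := ⟨_, rfl⟩
    obtain ⟨Sdh, hSdh⟩ : ∃ x : ℝ, x = ∑ s, (dhat t s + σ) ^ (α - 1) * d t s := ⟨_, rfl⟩
    obtain ⟨Q2, hQ2d⟩ : ∃ x : ℝ, x = ∑ s, (q t s - d t s) ^ 2 := ⟨_, rfl⟩
    rw [← hDS, ← hAS, ← hAS']
    -- (r1) gradient error on the q-direction
    have habs_qd : ∑ s, |q t s - d t s| ≤ 2 := by
      have h := Finset.sum_le_sum (fun s (_ : s ∈ Finset.univ) =>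
        (abs_le.mpr ⟨by linarith [(hq t).1 s, (hd t).1 s], by linarith [(hq t).1 s, (hd t).1 s]⟩ :
          |q t s - d t s| ≤ q t s + d t s))
      rw [Finset.sum_add_distrib, (hq t).2, (hd t).2] at h
      linarith
    have habs_st : ∑ s, |dstar s - d t s| ≤ 2 := by
      have h := Finset.sum_le_sum (fun s (_ : s ∈ Finset.univ) =>
        (abs_le.mpr ⟨by linarith [hdstar.1 s, (hd t).1 s], by linarith [hdstar.1 s, (hd t).1 s]⟩ :
          |dstar s - d t s| ≤ dstar s + d t s))
      rw [Finset.sum_add_distrib, hdstar.2, (hd t).2] at h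
      linarith
    have hKε₂nn : 0 ≤ K * ε₂ := mul_nonneg hKnn hε₂pos.le
    have r1 : SQh - Sdh - 2 * (K * ε₂) ≤ P := by
      have hdiff : SQh - Sdh - P = ∑ s, ((dhat t s + σ) ^ (α - 1) - (d t s + σ) ^ (α - 1)) * (q t s - d t s) := by
        rw [hSQh, hSdh, hPd, ← Finset.sum_sub_distrib, ← Finset.sum_sub_distrib]
        exact Finset.sum_congr rfl fun s _ => by ring
      have hterm : ∀ s ∈ Finset.univ,
          ((dhat t s + σ) ^ (α - 1) - (d t s + σ) ^ (α - 1)) * (q t s - d t s)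
            ≤ K * ε₂ * |q t s - d t s| := by
        intro s _
        have h1 : |((dhat t s + σ) ^ (α - 1) - (d t s + σ) ^ (α - 1)) * (q t s - d t s)|
            ≤ K * ε₂ * |q t s - d t s| := by
          rw [abs_mul]
          exact mul_le_mul_of_nonneg_right (by rw [abs_sub_comm]; exact hlip s) (abs_nonneg _)
        exact le_trans (le_abs_self _) h1
      have hsum := Finset.sum_le_sum hterm
      rw [← Finset.mul_sum] at hsum
      have h2 : K * ε₂ * (∑ s, |q t s - d t s|) ≤ K * ε₂ * 2 :=
        mul_le_mul_of_nonneg_left habs_qd hKε₂nn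
      linarith [hdiff.le, hdiff.ge, hsum]
    have r3 : PS - 2 * (K * ε₂) ≤ SDh - Sdh := by
      have hdiff : PS - (SDh - Sdh) = ∑ s, ((d t s + σ) ^ (α - 1) - (dhat t s + σ) ^ (α - 1)) * (dstar s - d t s) := by
        rw [hPSd, hSDh, hSdh, ← Finset.sum_sub_distrib, ← Finset.sum_sub_distrib]
        exact Finset.sum_congr rfl fun s _ => by ring
      have hterm : ∀ s ∈ Finset.univ,
          ((d t s + σ) ^ (α - 1) - (dhat t s + σ) ^ (α - 1)) * (dstar s - d t s)
            ≤ K * ε₂ * |dstar s - d t s| := by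
        intro s _
        have h1 : |((d t s + σ) ^ (α - 1) - (dhat t s + σ) ^ (α - 1)) * (dstar s - d t s)|
            ≤ K * ε₂ * |dstar s - d t s| := by
          rw [abs_mul]
          exact mul_le_mul_of_nonneg_right (hlip s) (abs_nonneg _)
        exact le_trans (le_abs_self _) h1
      have hsum := Finset.sum_le_sum hterm
      rw [← Finset.mul_sum] at hsum
      have h2 : K * ε₂ * (∑ s, |dstar s - d t s|) ≤ K * ε₂ * 2 :=
        mul_le_mul_of_nonneg_left habs_st hKε₂nn
      linarith [hdiff.le, hdiff.ge, hsum]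
    -- (r2) oracle
    have r2 : α * SDh - (1 - α) * ε₁ ≤ α * SQh := by
      have h := horacle t dstar hdstar
      have hc1 : ∑ s, (α / (1 - α) * (dhat t s + σ) ^ (α - 1)) * q t s = α / (1 - α) * SQh := by
        rw [hSQh, Finset.mul_sum]
        exact Finset.sum_congr rfl fun s _ => by ring
      have hc2 : ∑ s, (α / (1 - α) * (dhat t s + σ) ^ (α - 1)) * dstar s = α / (1 - α) * SDh := by
        rw [hSDh, Finset.mul_sum]
        exact Finset.sum_congr rfl fun s _ => by ring
      rw [hc1, hc2] at h
      have h2 := mul_le_mul_of_nonneg_left (ge_iff_le.mp h) h1α.le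
      have heq1 : (1 - α) * (α / (1 - α) * SQh) = α * SQh := by
        field_simp
      have heq2 : (1 - α) * (α / (1 - α) * SDh - ε₁) = α * SDh - (1 - α) * ε₁ := by
        field_simp
      rw [heq1, heq2] at h2
      exact h2
    -- (r4) concavity
    have r4 : DS ≤ AS + α * PS := by
      have hterm : ∀ s ∈ Finset.univ,
          (dstar s + σ) ^ α ≤ (d t s + σ) ^ α + α * ((d t s + σ) ^ (α - 1) * (dstar s - d t s)) := by
        intro s _
        have h := renyi_concave_tangent hα0 hα1 (lt_of_lt_of_le hσ (hds t s))
          (le_trans hσ.le (hstars s))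
        have heq : dstar s + σ - (d t s + σ) = dstar s - d t s := by ring
        rw [heq] at h
        linarith [h]
      have h := Finset.sum_le_sum hterm
      rw [Finset.sum_add_distrib, ← Finset.mul_sum, ← hAS, ← hPSd] at h
      rw [hDS]
      exact h
    -- smoothness step
    have S1 : AS + α * η * P - α * K * η ^ 2 * Q2 ≤ AS' := by
      have hterm : ∀ s ∈ Finset.univ,
          (d t s + σ) ^ α + α * η * ((d t s + σ) ^ (α - 1) * (q t s - d t s))
              - α * K * η ^ 2 * ((q t s - d t s) ^ 2)
            ≤ (d (t + 1) s + σ) ^ α := by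
        intro s _
        have h := renyi_smooth hα0 hα1 hσ (hds t s) (hds (t + 1) s)
        have hdba : d (t + 1) s + σ - (d t s + σ) = η * (q t s - d t s) := by
          simp only [hstep t]; ring
        rw [hdba, ← hK] at h
        linarith [h]
      have h := Finset.sum_le_sum hterm
      rw [Finset.sum_sub_distrib, Finset.sum_add_distrib, ← Finset.mul_sum, ← Finset.mul_sum,
        ← hAS, ← hAS', ← hPd, ← hQ2d] at h
      exact h
    -- bound on Q2
    have hQ2 : Q2 ≤ 4 := by
      have hterm : ∀ s ∈ Finset.univ, (q t s - d t s) ^ 2 ≤ 2 * (q t s + d t s) := by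
        intro s _
        nlinarith [(hq t).1 s, (hd t).1 s, hqb t s, hdb t s]
      have h := Finset.sum_le_sum hterm
      rw [← Finset.mul_sum, Finset.sum_add_distrib, (hq t).2, (hd t).2, ← hQ2d] at h
      linarith
    have hQ2' : α * K * η ^ 2 * Q2 ≤ 4 * (α * K * η ^ 2) := by
      have hc : 0 ≤ α * K * η ^ 2 := mul_nonneg (mul_nonneg hα0.le hKnn) (sq_nonneg η)
      have := mul_le_mul_of_nonneg_left hQ2 hc
      linarith
    -- combine the gradient chain multiplied by α and η
    have hcomb : α * PS - (1 - α) * ε₁ - 4 * (α * (K * ε₂)) ≤ α * P := by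
      have h1 := mul_le_mul_of_nonneg_left r1 hα0.le
      have h3 := mul_le_mul_of_nonneg_left r3 hα0.le
      linarith [h1, h3, r2]
    have hηcomb := mul_le_mul_of_nonneg_left hcomb hηpos.le
    have hr4η := mul_le_mul_of_nonneg_left (show DS - AS ≤ α * PS by linarith [r4]) hηpos.le
    -- total descent
    have hbig : AS + η * (DS - AS)
        - (η * (1 - α) * ε₁ + 4 * (η * (α * (K * ε₂))) + 4 * (α * K * η ^ 2)) ≤ AS' := by
      linarith [S1, hQ2', hηcomb, hr4η]
    -- conclude
    have hWeq : η * (1 - α) * ε₁ + 4 * (η * (α * (K * ε₂))) + 4 * (α * K * η ^ 2)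
        = (1 - α) * (η * (0.9 * ε)) := by
      rw [hε₁, hK]
      linear_combination (-(4 * η * (1 - α) * ε₂ + 4 * (1 - α) * η ^ 2)) * hβ
        + (4 * η * (1 - α)) * hβε₂ + (4 * (1 - α) * η) * hβη
    have hW : 1 / (1 - α) * (η * (1 - α) * ε₁ + 4 * (η * (α * (K * ε₂))) + 4 * (α * K * η ^ 2))
        = η * (0.9 * ε) := by
      rw [hWeq]; field_simp
    have hc_nn : (0 : ℝ) ≤ 1 / (1 - α) := by positivity
    have h1 : DS - AS' ≤ DS - (AS + η * (DS - AS)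
        - (η * (1 - α) * ε₁ + 4 * (η * (α * (K * ε₂))) + 4 * (α * K * η ^ 2))) := by
      linarith [hbig]
    have h2 := mul_le_mul_of_nonneg_left h1 hc_nn
    have heq : 1 / (1 - α) * (DS - (AS + η * (DS - AS)
        - (η * (1 - α) * ε₁ + 4 * (η * (α * (K * ε₂))) + 4 * (α * K * η ^ 2))))
        = (1 - η) * (1 / (1 - α) * (DS - AS))
          + 1 / (1 - α) * (η * (1 - α) * ε₁ + 4 * (η * (α * (K * ε₂))) + 4 * (α * K * η ^ 2)) := by
      ring
    rw [heq, hW] at h2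
    exact h2
  -- geometric decay by induction
  have hdecay : ∀ n : ℕ, E n ≤ 0.9 * ε + (1 - η) ^ n * (E 0 - 0.9 * ε) := by
    intro n
    induction n with
    | zero => simp
    | succ m ih =>
      have h1 := key m
      have h2 : (1 - η) * E m ≤ (1 - η) * (0.9 * ε + (1 - η) ^ m * (E 0 - 0.9 * ε)) :=
        mul_le_mul_of_nonneg_left ih (by linarith)
      calc E (m + 1) ≤ (1 - η) * E m + η * (0.9 * ε) := h1
        _ ≤ (1 - η) * (0.9 * ε + (1 - η) ^ m * (E 0 - 0.9 * ε)) + η * (0.9 * ε) := by linarith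
        _ = 0.9 * ε + (1 - η) ^ (m + 1) * (E 0 - 0.9 * ε) := by ring
  -- initial gap
  have hE0 : E 0 ≤ B := by
    have h := hgap dstar hdstar
    simp only [hE]
    linarith [h]
  have hBpos : 0 < B := by
    rw [hB]; exact mul_pos (div_pos hα0 h1α) (Real.rpow_pos_of_pos hσ _)
  -- the exponential bound
  have hargs : 10 * α * σ ^ (α - 1) / ((1 - α) * ε) = B / (0.1 * ε) := by
    rw [hB]; field_simp; ring
  rw [hargs] at hT
  have hL : Real.log (B / (0.1 * ε)) ≤ η * T := by
    have h2 := mul_le_mul_of_nonneg_left (ge_iff_le.mp hT) hηpos.le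
    have h3 : η * (10 * α * σ ^ (α - 2) / ε) = 1 := by
      rw [hη, hβ]
      field_simp
      ring
    have h4 : η * (10 * α * σ ^ (α - 2) / ε * Real.log (B / (0.1 * ε)))
        = Real.log (B / (0.1 * ε)) := by
      rw [show η * (10 * α * σ ^ (α - 2) / ε * Real.log (B / (0.1 * ε)))
        = η * (10 * α * σ ^ (α - 2) / ε) * Real.log (B / (0.1 * ε)) by ring, h3, one_mul]
    linarith [h2, h4.le, h4.ge]
  have hexp : Real.exp (-(η * T)) * B ≤ 0.1 * ε := by
    have hBε : 0 < B / (0.1 * ε) := div_pos hBpos (by positivity)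
    have h1 : Real.exp (-(η * T)) ≤ Real.exp (-Real.log (B / (0.1 * ε))) :=
      Real.exp_le_exp.mpr (by linarith)
    have h2 : Real.exp (-Real.log (B / (0.1 * ε))) = (B / (0.1 * ε))⁻¹ := by
      rw [Real.exp_neg, Real.exp_log hBε]
    have h3 : (B / (0.1 * ε))⁻¹ * B = 0.1 * ε := by
      field_simp
    calc Real.exp (-(η * T)) * B ≤ Real.exp (-Real.log (B / (0.1 * ε))) * B :=
          mul_le_mul_of_nonneg_right h1 hBpos.le
      _ = 0.1 * ε := by rw [h2, h3]
  have hnn : (0 : ℝ) ≤ 1 - η := by linarith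
  have hpow1 : (1 - η) ^ T ≤ Real.exp (-(η * T)) := by
    have ha : 1 - η ≤ Real.exp (-η) := by linarith [Real.add_one_le_exp (-η)]
    calc (1 - η) ^ T ≤ Real.exp (-η) ^ T := pow_le_pow_left₀ hnn ha T
      _ = Real.exp (-(η * T)) := by rw [← Real.exp_nat_mul]; congr 1; ring
  have hpnn : (0 : ℝ) ≤ (1 - η) ^ T := pow_nonneg hnn T
  have htail : (1 - η) ^ T * (E 0 - 0.9 * ε) ≤ 0.1 * ε := by
    calc (1 - η) ^ T * (E 0 - 0.9 * ε) ≤ (1 - η) ^ T * E 0 :=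
          mul_le_mul_of_nonneg_left (by linarith) hpnn
      _ ≤ (1 - η) ^ T * B := mul_le_mul_of_nonneg_left hE0 hpnn
      _ ≤ Real.exp (-(η * T)) * B := mul_le_mul_of_nonneg_right hpow1 hBpos.le
      _ ≤ 0.1 * ε := hexp
  have hfin : E T ≤ ε := by
    have h := hdecay T
    linarith
  simp only [hE] at hfin
  linarith [hfin]
end
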